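/- For any square real matrices Γ₁ and Γ₂ with Γ₁ symmetric positive semidefinite and Γ₂ symmetric positive semidefinite, tr(Γ₁Γ₂Γ₁Γ₂) ≤ tr(Γ₁²Γ₂²). -/

import Mathlib

/-!
Expanding `tr (Cᴴ C)` for the commutator `C = AB - BA` of Hermitian `A`, `B` by cyclicity of
the trace gives `2 (tr (A²B²) - tr (ABAB))`, which is nonnegative because `Cᴴ C` is positive
semidefinite.
-/

open Matrix

namespace Matrix

variable {n 𝕜 : Type*} [Fintype n] [DecidableEq n] [RCLike 𝕜]

theorem trace_conjTranspose_mul_self_commutator {A B : Matrix n n 𝕜}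
    (hA : A.IsHermitian) (hB : B.IsHermitian) :
    ((A * B - B * A)ᴴ * (A * B - B * A)).trace
      = 2 * ((A ^ 2 * B ^ 2).trace - (A * B * A * B).trace) := by
  have hBAAB : (B * A * (A * B)).trace = (A ^ 2 * B ^ 2).trace := by
    simp only [pow_two, mul_assoc]; rw [trace_mul_comm]; simp only [mul_assoc]
  have hABBA : (A * B * (B * A)).trace = (A ^ 2 * B ^ 2).trace := by
    rw [trace_mul_comm, hBAAB]
  have hBABA : (B * A * (B * A)).trace = (A * B * A * B).trace := by
    rw [← mul_assoc, trace_mul_comm]; simp only [mul_assoc]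
  rw [conjTranspose_sub, conjTranspose_mul, conjTranspose_mul, hA.eq, hB.eq, sub_mul, mul_sub,
    mul_sub, trace_sub, trace_sub, trace_sub, hBAAB, hABBA, hBABA, ← mul_assoc (A * B) A B]
  ring

open scoped ComplexOrder in
theorem IsHermitian.trace_mul_mul_mul_le_trace_sq_mul_sq {A B : Matrix n n 𝕜}
    (hA : A.IsHermitian) (hB : B.IsHermitian) :
    (A * B * A * B).trace ≤ (A ^ 2 * B ^ 2).trace := by
  have h := (posSemidef_conjTranspose_mul_self (A * B - B * A)).trace_nonneg
  rw [trace_conjTranspose_mul_self_commutator hA hB] at h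
  rwa [← mul_zero 2, mul_le_mul_iff_right₀ two_pos, sub_nonneg] at h

end Matrix

theorem trace_psd_product_inequality
    {d : ℕ} (Γ₁ Γ₂ : Matrix (Fin d) (Fin d) ℝ)
    (h₁ : Γ₁.PosSemidef) (h₂ : Γ₂.PosSemidef) :
    (Γ₁ * Γ₂ * Γ₁ * Γ₂).trace ≤ (Γ₁ ^ 2 * Γ₂ ^ 2).trace :=
  IsHermitian.trace_mul_mul_mul_le_trace_sq_mul_sq h₁.isHermitian h₂.isHermitian
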